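/- Under the same hypotheses, if Π : {1} ∪ A ⇉ {2} ∪ A is a system of treks in D without sided intersection and τ_1 is the trek of Π with source 1, then the left-hand side of τ_1 is not equal to {1}, the top node of τ_1 is not 1, there is a proper directed path from top(τ_1) to 1, and top(τ_1) ∈ Tops_A(1,2). -/

import Mathlib

open Matrix BigOperators

def SupportedOn {V : Type} (E : V → V → Prop) (Λ : Matrix V V ℝ) : Prop :=
  ∀ u v, ¬ E u v → Λ u v = 0

def Acyclic {V : Type} (E : V → V → Prop) : Prop :=
  ∀ v, ¬ Relation.TransGen E v v

def cycAdj (p : ℕ) (i j : Fin p) : Prop :=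
  (i.1 + 1) % p = j.1 ∨ (j.1 + 1) % p = i.1

structure Trek {V : Type} (E : V → V → Prop) (u v : V) where
  left : List V
  right : List V
  left_ne : left ≠ []
  right_ne : right ≠ []
  top_eq : left.head left_ne = right.head right_ne
  chain_left : List.Chain' E left
  chain_right : List.Chain' E right
  last_left : left.getLast left_ne = u
  last_right : right.getLast right_ne = v

def Trek.top {V : Type} {E : V → V → Prop} {u v : V} (τ : Trek E u v) : V :=
  τ.left.head τ.left_ne

def edgeProd {V : Type} (Λ : Matrix V V ℝ) (l : List V) : ℝ :=
  ((l.zip l.tail).map fun p => Λ p.1 p.2).prod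

def Trek.mono {V : Type} {E : V → V → Prop} {u v : V} (Λ Ω : Matrix V V ℝ)
    (τ : Trek E u v) : ℝ :=
  Ω τ.top τ.top * edgeProd Λ τ.left * edgeProd Λ τ.right

structure TrekSystem {V : Type} (E : V → V → Prop) {n : ℕ} (x y : Fin n → V) where
  perm : Equiv.Perm (Fin n)
  trek : ∀ i, Trek E (x i) (y (perm i))

def TrekSystem.NoSided {V : Type} {E : V → V → Prop} {n : ℕ} {x y : Fin n → V}
    (S : TrekSystem E x y) : Prop :=
  ∀ i j, i ≠ j →
    (∀ a : V, ¬(a ∈ (S.trek i).left ∧ a ∈ (S.trek j).left)) ∧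
    (∀ a : V, ¬(a ∈ (S.trek i).right ∧ a ∈ (S.trek j).right))

structure DWalk {U : Type} (E : U → U → Prop) (u v : U) where
  steps : List (Bool × U × U)
  ne : steps ≠ []
  first_eq : (steps.head ne).2.1 = u
  last_eq : (steps.getLast ne).2.2 = v
  edge : ∀ s ∈ steps, (s.1 = true → E s.2.1 s.2.2) ∧ (s.1 = false → E s.2.2 s.2.1)
  chain : List.Chain' (fun s t : Bool × U × U => s.2.2 = t.2.1) steps

def stepPairOK {U : Type} (A : Set U) (s t : Bool × U × U) : Prop :=
  ((s.1 = true ∧ t.1 = false) → s.2.2 ∈ A) ∧ (¬(s.1 = true ∧ t.1 = false) → s.2.2 ∉ A)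

def DWalk.DConn {U : Type} {E : U → U → Prop} {u v : U} (A : Set U)
    (w : DWalk E u v) : Prop :=
  List.Chain' (stepPairOK A) w.steps

def topOf {U : Type} : List (Bool × U × U) → U → U
  | [], u => u
  | (d, a, _b) :: rest, _ => if d then a else topOf rest _b

def DWalk.top {U : Type} {E : U → U → Prop} {u v : U} (w : DWalk E u v) : U :=
  topOf w.steps u

def TopsA {U : Type} (E : U → U → Prop) (A : Set U) (u v : U) : Set U :=
  {t | ∃ w : DWalk E u v, w.DConn A ∧ w.top = t}

def anAvoid {U : Type} (E : U → U → Prop) (A : Set U) (x : U) : Set U :=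
  {u | u ∉ A ∧ Relation.ReflTransGen (fun a b => E a b ∧ a ∉ A ∧ b ∉ A) u x}

def EA {U : Type} (E : U → U → Prop) (A : Set U) (n1 n2 : U) : Set (U × U) :=
  {e | E e.1 e.2 ∧ e.1 ∈ TopsA E A n1 n2 ∧ e.2 ∈ anAvoid E A n1 ∧ e.2 ∉ TopsA E A n1 n2}

def IsProperPath {U : Type} (E : U → U → Prop) (A : Set U) (l : List U) : Prop :=
  l ≠ [] ∧ List.Chain' (fun a b => E a b ∧ a ∉ A) l

def DigraphCov {U : Type} [Fintype U] [DecidableEq U] (E : U → U → Prop) :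
    Set (Matrix U U ℝ) :=
  {S | ∃ Λ Ω : Matrix U U ℝ, SupportedOn E Λ ∧ Ω.IsDiag ∧ (∀ u, 0 < Ω u u) ∧
        S = ((1 - Λ)⁻¹)ᵀ * Ω * (1 - Λ)⁻¹}

def BSupported {V : Type} (B : SimpleGraph V) (Ω : Matrix V V ℝ) : Prop :=
  ∀ u v, u ≠ v → ¬ B.Adj u v → Ω u v = 0

def MixedCov {V : Type} [Fintype V] [DecidableEq V] (D : V → V → Prop)
    (B : SimpleGraph V) : Set (Matrix V V ℝ) :=
  {S | ∃ Λ Ω : Matrix V V ℝ, SupportedOn D Λ ∧ Ω.PosDef ∧ BSupported B Ω ∧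
        S = ((1 - Λ)⁻¹)ᵀ * Ω * (1 - Λ)⁻¹}

def StrictlyGaussianCausal {V : Type} [Fintype V] [DecidableEq V]
    (D : V → V → Prop) (B : SimpleGraph V) : Prop :=
  ∃ (U : Type) (iF : Fintype U) (iD : DecidableEq U) (ι : V ↪ U) (E : U → U → Prop),
    Acyclic E ∧
      (fun S : Matrix U U ℝ => S.submatrix ι ι) '' (@DigraphCov U iF iD E) = MixedCov D B

def Chordal {V : Type} (B : SimpleGraph V) : Prop :=
  ∀ n : ℕ, 4 ≤ n → ∀ f : ZMod n → V, Function.Injective f →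
    (∀ i, B.Adj (f i) (f (i + 1))) →
    ∃ i j : ZMod n, j ≠ i + 1 ∧ i ≠ j + 1 ∧ i ≠ j ∧ B.Adj (f i) (f j)

def ChainGraph {V : Type} (D : V → V → Prop) (B : SimpleGraph V) : Prop :=
  ¬ ∃ u v, D u v ∧ Relation.ReflTransGen (fun a b => D a b ∨ B.Adj a b) v u


/-
Follow the trek of Π that starts at 1: it ends at 2 or at a node of A, which is the source of
another trek of Π, and so on. Since Π has no sided intersection, this successor relation is
injective and 1 has no predecessor, so on the finite index set the chain cannot cycle and ends at
2. Sidedness also forces every node of A on a side of a trek to be that side's endpoint, so the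
treks glue, with colliders exactly at the junctions in A, to a d-connecting walk from 1 to 2
whose top is top(τ₁). If top(τ₁) were 1, this walk would leave 1 along an outgoing edge, and
prefixing a d-connecting walk from p to 1 would give one from p to 2. The directed path from
top(τ₁) to 1 is the left side of τ₁, which avoids A.
-/

theorem acc_of_injective_of_finite {α : Type*} [Finite α] {r : α → α → Prop}
    (hr : ∀ ⦃a b c⦄, r a c → r b c → a = b) {a₀ : α} (h₀ : ∀ b, ¬ r b a₀) :
    Acc (fun b a => r a b) a₀ := by
  -- The inaccessible elements carry an injective successor map; on a finite set it is
  -- surjective, so `a₀` would have a predecessor.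
  by_contra hna
  let s := {a | ¬ Acc (fun b a => r a b) a}
  have hsucc : ∀ a : s, ∃ b : s, r a b := by
    rintro ⟨a, ha⟩
    by_contra! h
    exact ha ⟨_, fun b hb => by_contra fun hb' => h ⟨b, hb'⟩ hb⟩
  choose f hf using hsucc
  have hinj : f.Injective := fun a b hab => Subtype.ext (hr (hf a) (hab ▸ hf b))
  obtain ⟨b, hb⟩ := Finite.injective_iff_surjective.mp hinj ⟨a₀, hna⟩
  have hfb := hf b
  rw [hb] at hfb
  exact h₀ b hfb

theorem Acc.not_rel_self {α : Type*} {r : α → α → Prop} {a : α} (h : Acc r a) : ¬ r a a := by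
  induction h with
  | intro a _ ih => exact fun haa => ih a haa haa

theorem List.Nodup.getLast_notMem_dropLast {α : Type*} {l : List α} (hl : l.Nodup)
    (h : l ≠ []) : l.getLast h ∉ l.dropLast := by
  rw [← List.dropLast_append_getLast h] at hl
  exact fun hmem => List.disjoint_of_nodup_append hl hmem (List.mem_singleton_self _)

theorem Acyclic.nodup {V : Type} {E : V → V → Prop} (hE : Acyclic E) {l : List V}
    (hl : l.IsChain E) : l.Nodup := by
  refine (List.isChain_iff_pairwise.mp (hl.imp fun _ _ => Relation.TransGen.single)).imp ?_
  rintro a _ hab rfl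
  exact hE a hab

section Walks

variable {V : Type} {E : V → V → Prop} {A : Set V}

structure IsDConnWalk (E : V → V → Prop) (A : Set V) (L : List (Bool × V × V)) (u v : V) :
    Prop where
  ne : L ≠ []
  first_eq : (L.head ne).2.1 = u
  last_eq : (L.getLast ne).2.2 = v
  edge : ∀ s ∈ L, (s.1 = true → E s.2.1 s.2.2) ∧ (s.1 = false → E s.2.2 s.2.1)
  chain : L.IsChain fun s t => s.2.2 = t.2.1
  dConn : L.IsChain (stepPairOK A)

theorem DWalk.isDConnWalk {u v : V} (w : DWalk E u v) (hw : w.DConn A) :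
    IsDConnWalk E A w.steps u v :=
  ⟨w.ne, w.first_eq, w.last_eq, w.edge, w.chain, hw⟩

theorem IsDConnWalk.exists_dWalk {L : List (Bool × V × V)} {u v : V}
    (W : IsDConnWalk E A L u v) : ∃ w : DWalk E u v, w.DConn A ∧ w.steps = L :=
  ⟨⟨L, W.ne, W.first_eq, W.last_eq, W.edge, W.chain⟩, W.dConn, rfl⟩

theorem IsDConnWalk.congr {L : List (Bool × V × V)} {u v u' v' : V}
    (W : IsDConnWalk E A L u v) (hu : u = u') (hv : v = v') : IsDConnWalk E A L u' v' :=
  hu ▸ hv ▸ W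

theorem stepPairOK_of_collider {s t : Bool × V × V} (hs : s.1 = true) (ht : t.1 = false)
    (hA : s.2.2 ∈ A) : stepPairOK A s t :=
  ⟨fun _ => hA, fun h => absurd ⟨hs, ht⟩ h⟩

theorem stepPairOK_of_not_collider {s t : Bool × V × V} (h : ¬(s.1 = true ∧ t.1 = false))
    (hA : s.2.2 ∉ A) : stepPairOK A s t :=
  ⟨fun h' => absurd h' h, fun _ => hA⟩

theorem isDConnWalk_singleton {d : Bool} {a b : V} (h : cond d E (flip E) a b) :
    IsDConnWalk E A [(d, a, b)] a b where
  ne := List.cons_ne_nil _ _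
  first_eq := rfl
  last_eq := rfl
  edge s hs := by
    rw [List.mem_singleton.mp hs]
    cases d <;> simp_all [flip]
  chain := List.isChain_singleton _
  dConn := List.isChain_singleton _

theorem IsDConnWalk.append {L₁ L₂ : List (Bool × V × V)} {u m v : V}
    (W₁ : IsDConnWalk E A L₁ u m) (W₂ : IsDConnWalk E A L₂ m v)
    (hm : stepPairOK A (L₁.getLast W₁.ne) (L₂.head W₂.ne)) :
    IsDConnWalk E A (L₁ ++ L₂) u v where
  ne := by simp [W₁.ne]
  first_eq := by rw [List.head_append_of_ne_nil W₁.ne]; exact W₁.first_eq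
  last_eq := by rw [List.getLast_append_of_ne_nil _ W₂.ne]; exact W₂.last_eq
  edge s hs := (List.mem_append.mp hs).elim (W₁.edge s) (W₂.edge s)
  chain := W₁.chain.append W₂.chain fun s hs t ht => by
    rw [List.getLast?_eq_some_getLast W₁.ne, Option.mem_some_iff] at hs
    rw [List.head?_eq_some_head W₂.ne, Option.mem_some_iff] at ht
    rw [← hs, ← ht, W₁.last_eq, W₂.first_eq]
  dConn := W₁.dConn.append W₂.dConn fun s hs t ht => by
    rw [List.getLast?_eq_some_getLast W₁.ne, Option.mem_some_iff] at hs
    rw [List.head?_eq_some_head W₂.ne, Option.mem_some_iff] at ht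
    rwa [← hs, ← ht]

theorem IsDConnWalk.fst_head_eq_false {L : List (Bool × V × V)} {z u v : V}
    (W : IsDConnWalk E A L u v) (hu : u ∉ A) (hzu : ∃ w : DWalk E z u, w.DConn A)
    (hzv : ¬ ∃ w : DWalk E z v, w.DConn A) : (L.head W.ne).1 = false := by
  by_contra hL
  obtain ⟨w, hw⟩ := hzu
  have Wzv := (w.isDConnWalk hw).append W <|
    stepPairOK_of_not_collider (fun h => hL h.2) (by rwa [w.last_eq])
  obtain ⟨w', hw', -⟩ := Wzv.exists_dWalk
  exact hzv ⟨w', hw'⟩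

end Walks

section Paths

variable {V : Type} {E : V → V → Prop} {A : Set V}

def pathSteps (d : Bool) : List V → List (Bool × V × V)
  | a :: b :: t => (d, a, b) :: pathSteps d (b :: t)
  | _ => []

theorem fst_of_mem_pathSteps {d : Bool} :
    ∀ {l : List V} {s : Bool × V × V}, s ∈ pathSteps d l → s.1 = d
  | _ :: _ :: _, _, hs => by
    rcases List.mem_cons.mp hs with rfl | hs
    exacts [rfl, fst_of_mem_pathSteps hs]

theorem pathSteps_ne_nil {d : Bool} {l : List V} (h : 2 ≤ l.length) : pathSteps d l ≠ [] := by
  match l, h with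
  | _ :: _ :: _, _ => exact List.cons_ne_nil _ _

theorem pathSteps_eq_nil {d : Bool} {l : List V} (h : l.length < 2) : pathSteps d l = [] := by
  match l, h with
  | [], _ | [_], _ => rfl

theorem isDConnWalk_pathSteps (d : Bool) :
    ∀ {l : List V} {u v : V}, 2 ≤ l.length → l.IsChain (cond d E (flip E)) →
      (∀ a ∈ l.tail.dropLast, a ∉ A) → l.head? = some u → l.getLast? = some v →
      IsDConnWalk E A (pathSteps d l) u v
  | [a, b], u, v, _, hc, _, hu, hv => by
    cases Option.some_injective _ hu
    cases Option.some_injective _ hv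
    exact isDConnWalk_singleton (List.isChain_pair.mp hc)
  | a :: b :: c :: t, u, v, _, hc, hA, hu, hv => by
    cases Option.some_injective _ hu
    rw [List.isChain_cons_cons] at hc
    have W := isDConnWalk_pathSteps d (u := b) (v := v) (by simp) hc.2
      (fun x hx => hA x (List.mem_of_mem_tail (by simpa using hx))) rfl
      (by simpa using hv)
    refine (isDConnWalk_singleton hc.1).append W
      (stepPairOK_of_not_collider ?_ (hA b (by simp)))
    show ¬(d = true ∧ d = false)
    cases d <;> simp

theorem topOf_append_of_forall_fst_eq_false :
    ∀ {L : List (Bool × V × V)}, (∀ s ∈ L, s.1 = false) →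
      ∀ (rest : List (Bool × V × V)) (u : V), topOf (L ++ rest) u = topOf rest (topOf L u)
  | [], _, _, _ => rfl
  | (d, a, b) :: L, hL, rest, u => by
    obtain rfl : d = false := hL _ (List.mem_cons_self ..)
    exact topOf_append_of_forall_fst_eq_false (fun s hs => hL s (List.mem_cons_of_mem _ hs)) rest b

theorem topOf_pathSteps_false :
    ∀ {l : List V} {u v : V}, l.head? = some u → l.getLast? = some v →
      topOf (pathSteps false l) u = v
  | [a], _, _, hu, hv => by simp_all [pathSteps, topOf]
  | a :: b :: t, u, v, hu, hv => by
    cases Option.some_injective _ hu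
    exact topOf_pathSteps_false (u := b) rfl (by simpa using hv)

theorem topOf_pathSteps_true_append {l : List V} {u : V} (h : 2 ≤ l.length)
    (hu : l.head? = some u) (rest : List (Bool × V × V)) (w : V) :
    topOf (pathSteps true l ++ rest) w = u := by
  match l, h with
  | _ :: _ :: _, _ => simpa [pathSteps, topOf] using hu

end Paths

namespace Trek

variable {V : Type} {E : V → V → Prop} {A : Set V} {u v : V} (τ : Trek E u v)

def walkSteps : List (Bool × V × V) :=
  pathSteps false τ.left.reverse ++ pathSteps true τ.right

theorem top_mem_left : τ.top ∈ τ.left := List.head_mem _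

theorem top_mem_right : τ.top ∈ τ.right := by
  rw [top, τ.top_eq]
  exact List.head_mem _

theorem source_mem_left : u ∈ τ.left := by
  simpa only [τ.last_left] using List.getLast_mem τ.left_ne

theorem target_mem_right : v ∈ τ.right := by
  simpa only [τ.last_right] using List.getLast_mem τ.right_ne

theorem head?_left : τ.left.head? = some τ.top := List.head?_eq_some_head τ.left_ne

theorem head?_right : τ.right.head? = some τ.top := by
  rw [List.head?_eq_some_head τ.right_ne, ← τ.top_eq, top]

theorem getLast?_left : τ.left.getLast? = some u := by
  rw [List.getLast?_eq_some_getLast τ.left_ne, τ.last_left]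

theorem getLast?_right : τ.right.getLast? = some v := by
  rw [List.getLast?_eq_some_getLast τ.right_ne, τ.last_right]

theorem top_eq_source_of_length_lt_two (h : τ.left.length < 2) : τ.top = u := by
  obtain ⟨a, ha⟩ := List.length_eq_one_iff.mp
    (le_antisymm (Nat.le_of_lt_succ h) (List.length_pos_of_ne_nil τ.left_ne))
  have htop := τ.top_mem_left
  have hu := τ.source_mem_left
  rw [ha, List.mem_singleton] at htop hu
  exact htop.trans hu.symm

theorem top_eq_target_of_length_lt_two (h : τ.right.length < 2) : τ.top = v := by
  obtain ⟨a, ha⟩ := List.length_eq_one_iff.mp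
    (le_antisymm (Nat.le_of_lt_succ h) (List.length_pos_of_ne_nil τ.right_ne))
  have htop := τ.top_mem_right
  have hv := τ.target_mem_right
  rw [ha, List.mem_singleton] at htop hv
  exact htop.trans hv.symm

theorem two_le_length_left (h : τ.top ≠ u) : 2 ≤ τ.left.length :=
  not_lt.mp (mt τ.top_eq_source_of_length_lt_two h)

theorem two_le_length_right (h : τ.top ≠ v) : 2 ≤ τ.right.length :=
  not_lt.mp (mt τ.top_eq_target_of_length_lt_two h)

theorem top_mem_dropLast_left (h : 2 ≤ τ.left.length) : τ.top ∈ τ.left.dropLast := by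
  have hne : τ.left.dropLast ≠ [] := by
    rw [← List.length_pos_iff, List.length_dropLast]
    omega
  rw [top, ← List.head_dropLast hne]
  exact List.head_mem hne

theorem source_notMem_dropLast_left (hE : Acyclic E) : u ∉ τ.left.dropLast := by
  simpa only [τ.last_left] using (hE.nodup τ.chain_left).getLast_notMem_dropLast τ.left_ne

theorem target_notMem_dropLast_right (hE : Acyclic E) : v ∉ τ.right.dropLast := by
  simpa only [τ.last_right] using (hE.nodup τ.chain_right).getLast_notMem_dropLast τ.right_ne

theorem length_left_lt_two_of_top_eq (hE : Acyclic E) (h : τ.top = u) : τ.left.length < 2 :=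
  not_le.mp fun h2 => τ.source_notMem_dropLast_left hE (by
    simpa only [h] using τ.top_mem_dropLast_left h2)

theorem isDConnWalk_pathSteps_left (h : 2 ≤ τ.left.length)
    (hA : ∀ a ∈ τ.left.dropLast, a ∉ A) :
    IsDConnWalk E A (pathSteps false τ.left.reverse) u τ.top :=
  isDConnWalk_pathSteps false (by simpa using h) (List.isChain_reverse.mpr τ.chain_left)
    (fun a ha => hA a (by
      rw [List.tail_reverse] at ha
      exact List.mem_reverse.mp (List.mem_of_mem_dropLast ha)))
    (by rw [List.head?_reverse, τ.getLast?_left]) (by rw [List.getLast?_reverse, τ.head?_left])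

theorem isDConnWalk_pathSteps_right (h : 2 ≤ τ.right.length)
    (hA : ∀ a ∈ τ.right.dropLast, a ∉ A) :
    IsDConnWalk E A (pathSteps true τ.right) τ.top v :=
  isDConnWalk_pathSteps true h τ.chain_right
    (fun a ha => hA a (by
      rw [← List.tail_dropLast] at ha
      exact List.mem_of_mem_tail ha))
    τ.head?_right τ.getLast?_right

theorem isDConnWalk_walkSteps (huv : u ≠ v) (hl : ∀ a ∈ τ.left.dropLast, a ∉ A)
    (hr : ∀ a ∈ τ.right.dropLast, a ∉ A) : IsDConnWalk E A τ.walkSteps u v := by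
  by_cases hl2 : 2 ≤ τ.left.length <;> by_cases hr2 : 2 ≤ τ.right.length
  · have Wl := τ.isDConnWalk_pathSteps_left hl2 hl
    refine Wl.append (τ.isDConnWalk_pathSteps_right hr2 hr) (stepPairOK_of_not_collider ?_ ?_)
    · rw [fst_of_mem_pathSteps (List.getLast_mem Wl.ne)]
      simp
    · rw [Wl.last_eq]
      exact hl _ (τ.top_mem_dropLast_left hl2)
  · rw [walkSteps, pathSteps_eq_nil (not_le.mp hr2), List.append_nil]
    have W := τ.isDConnWalk_pathSteps_left hl2 hl
    rwa [τ.top_eq_target_of_length_lt_two (not_le.mp hr2)] at W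
  · rw [walkSteps, pathSteps_eq_nil (by simpa using hl2), List.nil_append]
    have W := τ.isDConnWalk_pathSteps_right hr2 hr
    rwa [τ.top_eq_source_of_length_lt_two (not_le.mp hl2)] at W
  · exact absurd ((τ.top_eq_source_of_length_lt_two (not_le.mp hl2)).symm.trans
      (τ.top_eq_target_of_length_lt_two (not_le.mp hr2))) huv

theorem topOf_walkSteps_append (rest : List (Bool × V × V)) (h : τ.top ≠ v ∨ rest = []) :
    topOf (τ.walkSteps ++ rest) u = τ.top := by
  rw [walkSteps, List.append_assoc,
    topOf_append_of_forall_fst_eq_false (fun _ => fst_of_mem_pathSteps),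
    topOf_pathSteps_false (by rw [List.head?_reverse, τ.getLast?_left])
      (by rw [List.getLast?_reverse, τ.head?_left])]
  by_cases hr2 : 2 ≤ τ.right.length
  · exact topOf_pathSteps_true_append hr2 τ.head?_right rest _
  · obtain rfl := h.resolve_left (not_not.mpr (τ.top_eq_target_of_length_lt_two (not_le.mp hr2)))
    rw [pathSteps_eq_nil (not_le.mp hr2)]
    rfl

theorem fst_head_walkSteps_append_eq_false_iff (hE : Acyclic E) (huv : u ≠ v)
    (rest : List (Bool × V × V)) (h : τ.walkSteps ++ rest ≠ []) :
    ((τ.walkSteps ++ rest).head h).1 = false ↔ τ.top ≠ u := by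
  generalize hL : τ.walkSteps ++ rest = L at h
  rw [walkSteps, List.append_assoc] at hL
  subst hL
  constructor
  · intro hfalse htop
    have hr2 := τ.two_le_length_right fun h => huv (htop.symm.trans h)
    simp only [pathSteps_eq_nil (l := τ.left.reverse)
        (by simpa using τ.length_left_lt_two_of_top_eq hE htop),
      List.nil_append] at hfalse
    rw [List.head_append_of_ne_nil (pathSteps_ne_nil hr2),
      fst_of_mem_pathSteps (List.head_mem _)] at hfalse
    exact Bool.noConfusion hfalse
  · intro htop
    have hne := pathSteps_ne_nil (d := false) (l := τ.left.reverse)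
      (by simpa using τ.two_le_length_left htop)
    rw [List.head_append_of_ne_nil hne]
    exact fst_of_mem_pathSteps (List.head_mem hne)

theorem fst_getLast_walkSteps (h : τ.top ≠ v) (hne : τ.walkSteps ≠ []) :
    (τ.walkSteps.getLast hne).1 = true := by
  have hr := pathSteps_ne_nil (d := true) (τ.two_le_length_right h)
  simp only [walkSteps]
  rw [List.getLast_append_of_ne_nil _ hr]
  exact fst_of_mem_pathSteps (List.getLast_mem hr)

theorem reflTransGen_top (hA : ∀ a ∈ τ.left, a ∉ A) :
    Relation.ReflTransGen (fun a b => E a b ∧ a ∉ A) τ.top u := by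
  have hc : τ.left.IsChain fun a b => E a b ∧ a ∉ A :=
    τ.chain_left.imp_of_mem_imp fun a _ ha _ hab => ⟨hab, hA a ha⟩
  rw [top]
  simpa only [τ.last_left] using List.relationReflTransGen_of_exists_isChain _ hc τ.left_ne

end Trek

namespace TrekSystem

variable {V : Type} {E : V → V → Prop} {A : Set V} {n : ℕ} {x y : Fin n → V}
  {S : TrekSystem E x y}

def Links (S : TrekSystem E x y) (j k : Fin n) : Prop := y (S.perm j) = x k

theorem NoSided.eq_of_source_mem_left (hNS : S.NoSided) {j k : Fin n}
    (h : x k ∈ (S.trek j).left) : k = j :=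
  by_contra fun hkj => (hNS k j hkj).1 _ ⟨(S.trek k).source_mem_left, h⟩

theorem NoSided.eq_of_target_mem_right (hNS : S.NoSided) {j k : Fin n}
    (h : y (S.perm k) ∈ (S.trek j).right) : k = j :=
  by_contra fun hkj => (hNS k j hkj).2 _ ⟨(S.trek k).target_mem_right, h⟩

theorem NoSided.injective_target (hNS : S.NoSided) : Function.Injective fun j => y (S.perm j) :=
  fun j k h => hNS.eq_of_target_mem_right (by simpa only [h] using (S.trek k).target_mem_right)

theorem NoSided.eq_source_of_mem_left (hNS : S.NoSided) (hAx : A ⊆ Set.range x) {j : Fin n}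
    {a : V} (ha : a ∈ (S.trek j).left) (haA : a ∈ A) : a = x j := by
  obtain ⟨k, rfl⟩ := hAx haA
  rw [hNS.eq_of_source_mem_left ha]

theorem NoSided.eq_target_of_mem_right (hNS : S.NoSided) (hAy : A ⊆ Set.range y) {j : Fin n}
    {a : V} (ha : a ∈ (S.trek j).right) (haA : a ∈ A) : a = y (S.perm j) := by
  obtain ⟨m, rfl⟩ := hAy haA
  obtain ⟨k, rfl⟩ := S.perm.surjective m
  rw [hNS.eq_of_target_mem_right ha]

theorem NoSided.notMem_of_mem_dropLast_left (hE : Acyclic E) (hNS : S.NoSided)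
    (hAx : A ⊆ Set.range x) {j : Fin n} {a : V} (ha : a ∈ (S.trek j).left.dropLast) : a ∉ A :=
  fun haA => (S.trek j).source_notMem_dropLast_left hE <| by
    simpa only [← hNS.eq_source_of_mem_left hAx (List.mem_of_mem_dropLast ha) haA] using ha

theorem NoSided.notMem_of_mem_dropLast_right (hE : Acyclic E) (hNS : S.NoSided)
    (hAy : A ⊆ Set.range y) {j : Fin n} {a : V} (ha : a ∈ (S.trek j).right.dropLast) : a ∉ A :=
  fun haA => (S.trek j).target_notMem_dropLast_right hE <| by
    simpa only [← hNS.eq_target_of_mem_right hAy (List.mem_of_mem_dropLast ha) haA] using ha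

theorem NoSided.top_notMem (hNS : S.NoSided) (hAx : A ⊆ Set.range x) (hAy : A ⊆ Set.range y)
    {j : Fin n} (hj : x j ≠ y (S.perm j)) : (S.trek j).top ∉ A := fun h =>
  hj ((hNS.eq_source_of_mem_left hAx (S.trek j).top_mem_left h).symm.trans
    (hNS.eq_target_of_mem_right hAy (S.trek j).top_mem_right h))

theorem NoSided.acc_links (hNS : S.NoSided) {i : Fin n} (hi : x i ∉ Set.range y) :
    Acc (fun k j => S.Links j k) i :=
  acc_of_injective_of_finite (fun _ _ _ ha hb => hNS.injective_target (ha.trans hb.symm))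
    fun b hb => hi ⟨S.perm b, hb⟩

theorem NoSided.exists_isDConnWalk_walkSteps_append (hE : Acyclic E) (hNS : S.NoSided)
    (hAx : A ⊆ Set.range x) (hAy : A ⊆ Set.range y) {Q : V} (hyQ : Set.range y ⊆ insert Q A)
    {j : Fin n} (hj : Acc (fun k j => S.Links j k) j) :
    ∃ rest, IsDConnWalk E A ((S.trek j).walkSteps ++ rest) (x j) Q ∧
      topOf ((S.trek j).walkSteps ++ rest) (x j) = (S.trek j).top := by
  induction hj with
  | intro j hacc ih =>
  -- A trek with equal endpoints would be linked to itself.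
  have hj : x j ≠ y (S.perm j) := fun h =>
    (Acc.intro (r := fun k j => S.Links j k) j hacc).not_rel_self h.symm
  have W := (S.trek j).isDConnWalk_walkSteps hj (fun _ => hNS.notMem_of_mem_dropLast_left hE hAx)
    (fun _ => hNS.notMem_of_mem_dropLast_right hE hAy)
  rcases hyQ ⟨S.perm j, rfl⟩ with hQ | hA
  · refine ⟨[], ?_, (S.trek j).topOf_walkSteps_append [] (Or.inr rfl)⟩
    rw [List.append_nil]
    exact W.congr rfl hQ
  obtain ⟨k, hk⟩ := hAx hA
  obtain ⟨rest, Wk, -⟩ := ih k hk.symm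
  have hk' : x k ≠ y (S.perm k) := fun h => (hacc k hk.symm).not_rel_self h.symm
  have htopj : (S.trek j).top ≠ y (S.perm j) := fun h => hNS.top_notMem hAx hAy hj (by rwa [h])
  have htopk : (S.trek k).top ≠ x k := fun h => hNS.top_notMem hAx hAy hk' (by rwa [h, hk])
  refine ⟨(S.trek k).walkSteps ++ rest, W.append (Wk.congr hk rfl) ?_,
    (S.trek j).topOf_walkSteps_append _ (Or.inl htopj)⟩
  -- The junction `y (S.perm j) = x k ∈ A` is entered and left through arrowheads.
  exact stepPairOK_of_collider ((S.trek j).fst_getLast_walkSteps htopj _)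
    (((S.trek k).fst_head_walkSteps_append_eq_false_iff hE hk' rest _).2 htopk)
    (by rwa [W.last_eq])

theorem NoSided.trek_top_of_source (hE : Acyclic E) (hNS : S.NoSided) {P Q : V}
    (hxr : Set.range x = insert P A) (hyr : Set.range y = insert Q A) (hP : P ∉ A) (hPQ : P ≠ Q)
    {z : V} (hzP : ∃ w : DWalk E z P, w.DConn A) (hzQ : ¬ ∃ w : DWalk E z Q, w.DConn A)
    {i : Fin n} (hi : x i = P) :
    {a | a ∈ (S.trek i).left} ≠ {P} ∧ (S.trek i).top ≠ P ∧
      Relation.ReflTransGen (fun a b => E a b ∧ a ∉ A) (S.trek i).top P ∧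
      (S.trek i).top ∈ TopsA E A P Q := by
  subst hi
  have hAx : A ⊆ Set.range x := hxr ▸ Set.subset_insert _ _
  have hPy : x i ∉ Set.range y := by
    rw [hyr]
    rintro (h | h)
    exacts [hPQ h, hP h]
  obtain ⟨rest, W, htop⟩ := hNS.exists_isDConnWalk_walkSteps_append hE hAx
    (hyr ▸ Set.subset_insert _ _) hyr.subset (hNS.acc_links hPy)
  have htopP : (S.trek i).top ≠ x i :=
    ((S.trek i).fst_head_walkSteps_append_eq_false_iff hE (fun h => hPy ⟨_, h.symm⟩) rest _).1
      (W.fst_head_eq_false hP hzP hzQ)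
  refine ⟨fun h => htopP ((Set.ext_iff.mp h _).mp (S.trek i).top_mem_left), htopP,
    (S.trek i).reflTransGen_top fun a ha haA => hP ?_, ?_⟩
  · rwa [← hNS.eq_source_of_mem_left hAx ha haA]
  · obtain ⟨w, hw, hsteps⟩ := W.exists_dWalk
    exact ⟨w, hw, by rw [DWalk.top, hsteps, htop]⟩

end TrekSystem

theorem stmt13 {U : Type} (E : U → U → Prop) (hE : Acyclic E) (A : Set U)
    {p : ℕ} (hp : 4 ≤ p) (cyc : Fin p ↪ U) (hA : ∀ i, cyc i ∉ A)
    (hdc : ∀ i j : Fin p, i ≠ j →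
      ((∃ w : DWalk E (cyc i) (cyc j), w.DConn A) ↔ cycAdj p i j))
    {n : ℕ} (x y : Fin n → U)
    (hxr : Set.range x = insert (cyc ⟨0, by omega⟩) A)
    (hyr : Set.range y = insert (cyc ⟨1, by omega⟩) A)
    (S : TrekSystem E x y) (hNS : S.NoSided)
    (i0 : Fin n) (hx0 : x i0 = (cyc ⟨0, by omega⟩)) :
    {a | a ∈ (S.trek i0).left} ≠ {(cyc ⟨0, by omega⟩)} ∧
    (S.trek i0).top ≠ (cyc ⟨0, by omega⟩) ∧
    Relation.ReflTransGen (fun a b => E a b ∧ a ∉ A) (S.trek i0).top (cyc ⟨0, by omega⟩) ∧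
    (S.trek i0).top ∈ TopsA E A (cyc ⟨0, by omega⟩) (cyc ⟨1, by omega⟩) := by
  have hwrap : (p - 1 + 1) % p = 0 := by rw [Nat.sub_add_cancel (by omega), Nat.mod_self]
  have hzP := (hdc ⟨p - 1, by omega⟩ ⟨0, by omega⟩ (by simp [Fin.ext_iff]; omega)).2 (Or.inl hwrap)
  have hzQ := mt (hdc ⟨p - 1, by omega⟩ ⟨1, by omega⟩ (by simp [Fin.ext_iff]; omega)).1 <| by
    rintro (h | h)
    · exact absurd (hwrap.symm.trans h) zero_ne_one
    · rw [Fin.val_mk, Nat.mod_eq_of_lt (by omega : 1 + 1 < p), Fin.val_mk] at h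
      omega
  exact hNS.trek_top_of_source hE hxr hyr (hA _) (cyc.injective.ne (by simp [Fin.ext_iff]))
    hzP hzQ hx0
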